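/- arXiv:2411.18465 — 2 statements merged into one kernel-verified Lean document; each statement's English description precedes it below -/
import Mathlib

section
/- Let T be a tree on a vertex set V, let I be a set of edges of T, and let G be a simple graph on V such that every edge of G either belongs to I or joins two vertices in the same connected component of T − I. Let e ∈ I and let u, v be vertices lying in different connected components of the graph T − e obtained from T by deleting the single edge e. Then every walk from u to v in G traverses the edge e (i.e. e occurs among the edges of the walk). -/
/-- Let `T` be a tree, `I` a set of edges of `T`, and `G` a graph on the same
vertex set such that every edge of `G` either belongs to `I` or joins two
vertices in the same connected component of `T − I`. If `e ∈ I` and `u, v` lie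
in different components of `T − e`, then every walk from `u` to `v` in `G`
traverses the edge `e`. -/
theorem walk_mem_edges_of_separating
    {V : Type*} (T : SimpleGraph V) (hT : T.IsTree)
    (I : Set (Sym2 V)) (hI : I ⊆ T.edgeSet)
    (G : SimpleGraph V)
    (hG : ∀ a b : V, G.Adj a b → s(a, b) ∈ I ∨ (T.deleteEdges I).Reachable a b)
    (e : Sym2 V) (he : e ∈ I)
    (u v : V) (huv : ¬ (T.deleteEdges {e}).Reachable u v) :
    ∀ p : G.Walk u v, e ∈ p.edges := by
  intro p
  by_contra hne
  apply huv
  clear huv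
  induction p with
  | nil => exact SimpleGraph.Reachable.refl _
  | @cons a b c hab q ih =>
    simp only [SimpleGraph.Walk.edges_cons, List.mem_cons, not_or] at hne
    obtain ⟨h1, h2⟩ := hne
    refine SimpleGraph.Reachable.trans ?_ (ih h2)
    rcases hG a b hab with hmem | hreach
    · exact SimpleGraph.Adj.reachable
        (SimpleGraph.deleteEdges_adj.mpr
          ⟨(T.mem_edgeSet).mp (hI hmem), fun h => h1 (Set.mem_singleton_iff.mp h).symm⟩)
    · exact hreach.mono (SimpleGraph.deleteEdges_anti (by simpa using he))
end

section
/- Let T be a tree on a vertex set V, let I be a set of edges of T, and let G be a simple graph on V such that every edge of G either belongs to I or joins two vertices in the same connected component of T − I. Let u, v ∈ V and let Q be a path in G from u to v (a walk with no repeated vertices). Then the set of edges of I traversed by Q equals the set of edges of I lying on the unique path between u and v in the tree T. -/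
/-!
Fix an edge `e ∈ I` and let `K = T - e`. Since `T` is acyclic, `e` is a bridge, so its endpoints
lie in different components of `K`. Every edge of `G` and every edge of `T` is either `e` or joins
two vertices of the same component of `K` (for `G` because `T - I ≤ K`). Hence a trail in either
graph crosses between components of `K` only through `e`, and does so at most once: it uses `e`
exactly when its endpoints lie in different components of `K`. This condition depends only on
`u` and `v`, so `p` uses `e` iff `q` does.
-/

namespace SimpleGraph

variable {V : Type*} {H K : SimpleGraph V} {e : Sym2 V}

lemma adj_eq_or_reachable_deleteEdges {x y : V} (h : H.Adj x y) :
    s(x, y) = e ∨ (H.deleteEdges {e}).Reachable x y := by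
  by_cases hxy : s(x, y) = e
  · exact .inl hxy
  · exact .inr (Adj.reachable ((deleteEdges_adj ..).mpr ⟨h, hxy⟩))

namespace Walk

lemma reachable_of_notMem_edges (hH : ∀ x y, H.Adj x y → s(x, y) = e ∨ K.Reachable x y)
    {u v : V} (w : H.Walk u v) (he : e ∉ w.edges) : K.Reachable u v := by
  induction w with
  | nil => rfl
  | @cons u x v h w ih =>
    rw [edges_cons, List.mem_cons, not_or] at he
    exact ((hH u x h).resolve_left (Ne.symm he.1)).trans (ih he.2)

lemma IsTrail.not_reachable_of_mem_edges
    (hH : ∀ x y, H.Adj x y → s(x, y) = e ∨ K.Reachable x y)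
    (hab : ∀ ⦃a b⦄, s(a, b) = e → ¬K.Reachable a b)
    {u v : V} {w : H.Walk u v} (hw : w.IsTrail) (he : e ∈ w.edges) : ¬K.Reachable u v := by
  induction w with
  | nil => simp at he
  | @cons u x v h w ih =>
    rw [isTrail_cons] at hw
    rw [edges_cons, List.mem_cons] at he
    rcases he with rfl | he
    · exact fun huv => hab rfl (huv.trans (reachable_of_notMem_edges hH w hw.2).symm)
    · have hux : K.Reachable u x :=
        (hH u x h).resolve_left fun hux => hw.2 (hux ▸ he)
      exact fun huv => ih hw.1 he (hux.symm.trans huv)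

lemma IsTrail.mem_edges_iff_not_reachable
    (hH : ∀ x y, H.Adj x y → s(x, y) = e ∨ K.Reachable x y)
    (hab : ∀ ⦃a b⦄, s(a, b) = e → ¬K.Reachable a b)
    {u v : V} {w : H.Walk u v} (hw : w.IsTrail) : e ∈ w.edges ↔ ¬K.Reachable u v :=
  ⟨hw.not_reachable_of_mem_edges hH hab, not_imp_comm.mp (reachable_of_notMem_edges hH w)⟩

end Walk

end SimpleGraph

open SimpleGraph

/-- Lemma 3 of the paper (without the order of traversal): let `T` be a tree,
`I` a set of edges of `T`, and `G` a graph on the same vertex set such that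
every edge of `G` either belongs to `I` or joins two vertices in the same
connected component of `T − I`. Then for any path `p` from `u` to `v` in `G`,
the set of edges of `I` traversed by `p` equals the set of edges of `I` lying
on the (unique) path `q` between `u` and `v` in the tree `T`. -/
theorem path_edges_inter_eq_tree_path_edges_inter
    {V : Type*} (T : SimpleGraph V) (hT : T.IsTree)
    (I : Set (Sym2 V)) (hI : I ⊆ T.edgeSet)
    (G : SimpleGraph V)
    (hG : ∀ a b : V, G.Adj a b → s(a, b) ∈ I ∨ (T.deleteEdges I).Reachable a b)
    (u v : V) (p : G.Walk u v) (hp : p.IsPath)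
    (q : T.Walk u v) (hq : q.IsPath) :
    {e | e ∈ I ∧ e ∈ p.edges} = {e | e ∈ I ∧ e ∈ q.edges} := by
  refine Set.ext fun e => and_congr_right fun heI => ?_
  have hbridge : ∀ ⦃a b⦄, s(a, b) = e → ¬(T.deleteEdges {e}).Reachable a b := by
    rintro a b rfl
    exact isBridge_iff.mp (isAcyclic_iff_forall_isBridge.mp hT.isAcyclic (hI heI))
  have hGe : ∀ x y, G.Adj x y → s(x, y) = e ∨ (T.deleteEdges {e}).Reachable x y := by
    intro x y hxy
    refine (hG x y hxy).elim (fun hxyI => adj_eq_or_reachable_deleteEdges (hI hxyI)) fun h => ?_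
    exact .inr (h.mono (deleteEdges_anti (Set.singleton_subset_iff.mpr heI)))
  rw [hp.isTrail.mem_edges_iff_not_reachable hGe hbridge,
    hq.isTrail.mem_edges_iff_not_reachable (fun _ _ => adj_eq_or_reachable_deleteEdges) hbridge]
end
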